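/- arXiv:math/9908061 — 5 statements merged into one kernel-verified Lean document; each statement's English description precedes it below -/
import Mathlib

section
/- The Lie algebra L(α,β) with basis {H, E, A, B} and relations [H,E] = E, [H,A] = αA, [H,B] = βB, [A,B] = E, [E,A] = [E,B] = 0, α + β = 1, is Frobenius: the linear functional g* dual to E (sending E to 1 and H, A, B to 0) has the property that the bilinear form b(x,y) = g*([x,y]) is nondegenerate. -/
/-- The bracket of the Lie algebra `L(α,β)` on the 4-dimensional space spanned by
`H, E, A, B` (coordinates `0, 1, 2, 3`): `[H,E] = E`, `[H,A] = αA`, `[H,B] = βB`,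
`[A,B] = E`, `[E,A] = [E,B] = 0`, extended bilinearly and antisymmetrically. -/
def Lbracket {K : Type*} [Field K] (α β : K) (u v : Fin 4 → K) : Fin 4 → K :=
  ![0,
    (u 0 * v 1 - u 1 * v 0) + (u 2 * v 3 - u 3 * v 2),
    α * (u 0 * v 2 - u 2 * v 0),
    β * (u 0 * v 3 - u 3 * v 0)]

/-- The linear functional dual to `E`: it sends `E` to `1` and `H, A, B` to `0`,
i.e. it reads off the coefficient of `E` (coordinate `1`). -/
def Edual {K : Type*} [Field K] (u : Fin 4 → K) : K := u 1

/-- `L(α,β)` (with `α + β = 1`) is Frobenius: the bilinear form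
`b(x,y) = g*([x,y])`, with `g*` the functional dual to `E`, is nondegenerate. -/
theorem stmt1 (K : Type*) [Field K] [CharZero K] (α β : K) (h : α + β = 1) :
    ∀ x : Fin 4 → K, (∀ y : Fin 4 → K, Edual (Lbracket α β x y) = 0) → x = 0 := by
  intro x hx
  have h0 := hx ![1,0,0,0]
  have h1 := hx ![0,1,0,0]
  have h2 := hx ![0,0,1,0]
  have h3 := hx ![0,0,0,1]
  simp [Edual, Lbracket] at h0 h1 h2 h3
  funext i
  fin_cases i <;> simp [h0, h1, h2, h3]
end

section
/- In the Lie algebra L(1/2,1/2) with relations [H,E] = E, [H,A] = (1/2)A, [H,B] = (1/2)B, [A,B] = E, [E,A] = [E,B] = 0, the element r = H ∧ E + A ∧ B (where x ∧ y = x ⊗ y - y ⊗ x) satisfies the classical Yang–Baxter equation [r_{12}, r_{13}] + [r_{12}, r_{23}] + [r_{13}, r_{23}] = 0 in U(L)^{⊗3}. -/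
open scoped TensorProduct

/-- in `L(1/2,1/2)` with `[H,E] = E`, `[H,A] = (1/2)A`, `[H,B] = (1/2)B`,
`[A,B] = E`, `[E,A] = [E,B] = 0`, the element `r = H ∧ E + A ∧ B` satisfies the classical
Yang–Baxter equation `[r₁₂, r₁₃] + [r₁₂, r₂₃] + [r₁₃, r₂₃] = 0` in `U(L)^{⊗3}`.
This is formalized in any associative algebra `U` containing elements `H, E, A, B`
satisfying the commutator relations of `L(1/2,1/2)` (by the universal property, truth in
all such `U` is exactly truth in `U(L(1/2,1/2))`), brackets being commutators in
`U ⊗ U ⊗ U`. -/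
theorem stmt6 (K : Type*) [Field K] [CharZero K]
    (U : Type*) [Ring U] [Algebra K U] (H E A B : U)
    (hHE : H * E - E * H = E)
    (hHA : H * A - A * H = (1 / 2 : K) • A)
    (hHB : H * B - B * H = (1 / 2 : K) • B)
    (hAB : A * B - B * A = E)
    (hEA : E * A - A * E = 0)
    (hEB : E * B - B * E = 0) :
    let r12 : U ⊗[K] (U ⊗[K] U) :=
      H ⊗ₜ[K] (E ⊗ₜ[K] (1 : U)) - E ⊗ₜ[K] (H ⊗ₜ[K] (1 : U)) +
      (A ⊗ₜ[K] (B ⊗ₜ[K] (1 : U)) - B ⊗ₜ[K] (A ⊗ₜ[K] (1 : U)))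
    let r13 : U ⊗[K] (U ⊗[K] U) :=
      H ⊗ₜ[K] ((1 : U) ⊗ₜ[K] E) - E ⊗ₜ[K] ((1 : U) ⊗ₜ[K] H) +
      (A ⊗ₜ[K] ((1 : U) ⊗ₜ[K] B) - B ⊗ₜ[K] ((1 : U) ⊗ₜ[K] A))
    let r23 : U ⊗[K] (U ⊗[K] U) :=
      (1 : U) ⊗ₜ[K] (H ⊗ₜ[K] E) - (1 : U) ⊗ₜ[K] (E ⊗ₜ[K] H) +
      ((1 : U) ⊗ₜ[K] (A ⊗ₜ[K] B) - (1 : U) ⊗ₜ[K] (B ⊗ₜ[K] A))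
    (r12 * r13 - r13 * r12) + (r12 * r23 - r23 * r12) + (r13 * r23 - r23 * r13) = 0 := by
  have hEH : E * H = H * E - E := eq_sub_of_add_eq (sub_eq_iff_eq_add'.mp hHE).symm
  have hAH : A * H = H * A - (1 / 2 : K) • A := eq_sub_of_add_eq (sub_eq_iff_eq_add'.mp hHA).symm
  have hBH : B * H = H * B - (1 / 2 : K) • B := eq_sub_of_add_eq (sub_eq_iff_eq_add'.mp hHB).symm
  have hBA : B * A = A * B - E := eq_sub_of_add_eq (sub_eq_iff_eq_add'.mp hAB).symm
  have hAE : A * E = E * A := by rw [sub_eq_zero] at hEA; exact hEA.symm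
  have hBE : B * E = E * B := by rw [sub_eq_zero] at hEB; exact hEB.symm
  intro r12 r13 r23
  simp only [r12, r13, r23]
  simp only [mul_sub, sub_mul, mul_add, add_mul,
    Algebra.TensorProduct.tmul_mul_tmul, one_mul, mul_one]
  rw [hEH, hAH, hBH, hBA, hAE, hBE]
  simp only [TensorProduct.sub_tmul, TensorProduct.tmul_sub,
    ← TensorProduct.smul_tmul', TensorProduct.tmul_smul]
  module
end

section
/- Let g = sl(N) (N ≥ 3) with matrix units E_{ij}, H = (1/2)(E_{11} - E_{NN}). Then r = H ∧ E_{1N} + Σ_{i=2}^{N-1} E_{1i} ∧ E_{iN} satisfies the classical Yang–Baxter equation [r_{12}, r_{13}] + [r_{12}, r_{23}] + [r_{13}, r_{23}] = 0. -/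
open scoped TensorProduct

namespace Stmt7Aux

variable {R : Type*} [CommRing R] {A : Type*} [Ring A] [Algebra R A]

/-- The value of a single cell of the CYBE double sum. -/
noncomputable def cell (a b c d : A) : A ⊗[R] (A ⊗[R] A) :=
    (a*c - c*a) ⊗ₜ[R] (b ⊗ₜ[R] d) - (a*d - d*a) ⊗ₜ[R] (b ⊗ₜ[R] c)
  - (b*c - c*b) ⊗ₜ[R] (a ⊗ₜ[R] d) + (b*d - d*b) ⊗ₜ[R] (a ⊗ₜ[R] c)
  + a ⊗ₜ[R] ((b*c - c*b) ⊗ₜ[R] d) - a ⊗ₜ[R] ((b*d - d*b) ⊗ₜ[R] c)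
  - b ⊗ₜ[R] ((a*c - c*a) ⊗ₜ[R] d) + b ⊗ₜ[R] ((a*d - d*a) ⊗ₜ[R] c)
  + a ⊗ₜ[R] (c ⊗ₜ[R] (b*d - d*b)) - a ⊗ₜ[R] (d ⊗ₜ[R] (b*c - c*b))
  - b ⊗ₜ[R] (c ⊗ₜ[R] (a*d - d*a)) + b ⊗ₜ[R] (d ⊗ₜ[R] (a*c - c*a))

lemma cell_eq (a b c d : A) :
    ((a ⊗ₜ[R] (b ⊗ₜ[R] (1:A)) - b ⊗ₜ[R] (a ⊗ₜ[R] (1:A))) *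
       (c ⊗ₜ[R] ((1:A) ⊗ₜ[R] d) - d ⊗ₜ[R] ((1:A) ⊗ₜ[R] c)) -
     (c ⊗ₜ[R] ((1:A) ⊗ₜ[R] d) - d ⊗ₜ[R] ((1:A) ⊗ₜ[R] c)) *
       (a ⊗ₜ[R] (b ⊗ₜ[R] (1:A)) - b ⊗ₜ[R] (a ⊗ₜ[R] (1:A)))) +
    ((a ⊗ₜ[R] (b ⊗ₜ[R] (1:A)) - b ⊗ₜ[R] (a ⊗ₜ[R] (1:A))) *
       ((1:A) ⊗ₜ[R] (c ⊗ₜ[R] d) - (1:A) ⊗ₜ[R] (d ⊗ₜ[R] c)) -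
     ((1:A) ⊗ₜ[R] (c ⊗ₜ[R] d) - (1:A) ⊗ₜ[R] (d ⊗ₜ[R] c)) *
       (a ⊗ₜ[R] (b ⊗ₜ[R] (1:A)) - b ⊗ₜ[R] (a ⊗ₜ[R] (1:A)))) +
    ((a ⊗ₜ[R] ((1:A) ⊗ₜ[R] b) - b ⊗ₜ[R] ((1:A) ⊗ₜ[R] a)) *
       ((1:A) ⊗ₜ[R] (c ⊗ₜ[R] d) - (1:A) ⊗ₜ[R] (d ⊗ₜ[R] c)) -
     ((1:A) ⊗ₜ[R] (c ⊗ₜ[R] d) - (1:A) ⊗ₜ[R] (d ⊗ₜ[R] c)) *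
       (a ⊗ₜ[R] ((1:A) ⊗ₜ[R] b) - b ⊗ₜ[R] ((1:A) ⊗ₜ[R] a)))
    = cell (R := R) a b c d := by
  simp only [cell, mul_sub, sub_mul, Algebra.TensorProduct.tmul_mul_tmul, one_mul, mul_one,
    TensorProduct.sub_tmul, TensorProduct.tmul_sub]
  abel

lemma sum_comm_expand {α : Type*} (s : Finset α) (f g : α → A ⊗[R] (A ⊗[R] A)) :
    (∑ i ∈ s, f i) * (∑ j ∈ s, g j) - (∑ j ∈ s, g j) * (∑ i ∈ s, f i)
      = ∑ i ∈ s, ∑ j ∈ s, (f i * g j - g j * f i) := by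
  rw [Finset.sum_mul_sum, Finset.sum_mul_sum, Finset.sum_comm (s := s) (t := s)
    (f := fun j i => g j * f i), ← Finset.sum_sub_distrib]
  exact Finset.sum_congr rfl fun i _ => (Finset.sum_sub_distrib _ _).symm

end Stmt7Aux

attribute [local instance 100] LieRing.ofAssociativeRing

set_option maxHeartbeats 2000000 in
/-- in `g = sl(N)`, `N ≥ 3` (indexed by `Fin N`, the paper's `1,…,N` becoming
`0,…,N-1`), with `H = (1/2)(E_{11} - E_{NN})`, the element
`r = H ∧ E_{1N} + Σ_{i=2}^{N-1} E_{1i} ∧ E_{iN}` satisfies the classical Yang–Baxter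
equation `[r₁₂, r₁₃] + [r₁₂, r₂₃] + [r₁₃, r₂₃] = 0`, computed in
`U(sl(N))^{⊗3}` with the standard embeddings and commutator brackets. -/
theorem stmt7 (K : Type*) [Field K] [CharZero K] (N : ℕ) (hN : 3 ≤ N) :
    let fst : Fin N := ⟨0, by omega⟩
    let lst : Fin N := ⟨N - 1, by omega⟩
    let g := LieAlgebra.SpecialLinear.sl (Fin N) K
    let U := UniversalEnvelopingAlgebra K g
    let ι : g →ₗ⁅K⁆ U := UniversalEnvelopingAlgebra.ι K
    let E : g := LieAlgebra.SpecialLinear.single fst lst (by simp [fst, lst, Fin.ext_iff]; omega) (1 : K)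
    let H : g := ⟨(1 / 2 : K) •
        (Matrix.single fst fst 1 - Matrix.single lst lst 1),
      show _ ∈ LinearMap.ker (Matrix.traceLinearMap (Fin N) K K) from
        LinearMap.mem_ker.2 (by
          simp [Matrix.trace_smul, Matrix.trace_sub, Matrix.trace_single_eq_same])⟩
    let A : Fin N → g := fun i =>
      if h : i = fst then 0 else LieAlgebra.SpecialLinear.single fst i (Ne.symm h) (1 : K)
    let B : Fin N → g := fun i =>
      if h : i = lst then 0 else LieAlgebra.SpecialLinear.single i lst h (1 : K)
    let S : Finset (Fin N) := Finset.univ.filter fun i => 1 ≤ (i : ℕ) ∧ (i : ℕ) ≤ N - 2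
    let r12 : U ⊗[K] (U ⊗[K] U) :=
      ι H ⊗ₜ[K] (ι E ⊗ₜ[K] (1 : U)) - ι E ⊗ₜ[K] (ι H ⊗ₜ[K] (1 : U)) +
      ∑ i ∈ S, (ι (A i) ⊗ₜ[K] (ι (B i) ⊗ₜ[K] (1 : U)) -
                ι (B i) ⊗ₜ[K] (ι (A i) ⊗ₜ[K] (1 : U)))
    let r13 : U ⊗[K] (U ⊗[K] U) :=
      ι H ⊗ₜ[K] ((1 : U) ⊗ₜ[K] ι E) - ι E ⊗ₜ[K] ((1 : U) ⊗ₜ[K] ι H) +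
      ∑ i ∈ S, (ι (A i) ⊗ₜ[K] ((1 : U) ⊗ₜ[K] ι (B i)) -
                ι (B i) ⊗ₜ[K] ((1 : U) ⊗ₜ[K] ι (A i)))
    let r23 : U ⊗[K] (U ⊗[K] U) :=
      (1 : U) ⊗ₜ[K] (ι H ⊗ₜ[K] ι E) - (1 : U) ⊗ₜ[K] (ι E ⊗ₜ[K] ι H) +
      ∑ i ∈ S, ((1 : U) ⊗ₜ[K] (ι (A i) ⊗ₜ[K] ι (B i)) -
                (1 : U) ⊗ₜ[K] (ι (B i) ⊗ₜ[K] ι (A i)))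
    (r12 * r13 - r13 * r12) + (r12 * r23 - r23 * r12) + (r13 * r23 - r23 * r13) = 0 := by
  intro fst lst g U ι E H A B S r12 r13 r23
  -- basic index facts
  have hfl : fst ≠ lst := by simp [fst, lst, Fin.ext_iff]; omega
  have hlf : lst ≠ fst := hfl.symm
  have hfstS : fst ∉ S := by simp [S, fst]
  -- matrix product helpers
  have mulsame : ∀ (a b c : Fin N), Matrix.single a b (1:K) *
      Matrix.single b c 1 = Matrix.single a c 1 := fun a b c => by
    rw [Matrix.single_mul_single_same, one_mul]
  have mulne : ∀ (a b c d : Fin N), b ≠ c → Matrix.single a b (1:K) *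
      Matrix.single c d 1 = 0 := fun a b c d h =>
    Matrix.single_mul_single_of_ne (c := 1) a b c h 1
  -- value lemmas
  have hHval : (H : Matrix (Fin N) (Fin N) K) = (1/2 : K) •
      (Matrix.single fst fst 1 - Matrix.single lst lst 1) := rfl
  have hEval : (E : Matrix (Fin N) (Fin N) K) = Matrix.single fst lst 1 := rfl
  have hA : ∀ (i : Fin N) (h : i ≠ fst), A i = LieAlgebra.SpecialLinear.single fst i (Ne.symm h) (1 : K) :=
    fun i h => dif_neg h
  have hB : ∀ (i : Fin N) (h : i ≠ lst), B i = LieAlgebra.SpecialLinear.single i lst h (1 : K) :=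
    fun i h => dif_neg h
  have hAval : ∀ (i : Fin N), i ≠ fst →
      ((A i : g) : Matrix (Fin N) (Fin N) K) = Matrix.single fst i 1 := by
    intro i hi
    rw [hA i hi, LieAlgebra.SpecialLinear.val_single]
  have hBval : ∀ (i : Fin N), i ≠ lst →
      ((B i : g) : Matrix (Fin N) (Fin N) K) = Matrix.single i lst 1 := by
    intro i hi
    rw [hB i hi, LieAlgebra.SpecialLinear.val_single]
  -- bracket lemmas in g
  have hHE : ⁅H, E⁆ = E := by
    apply Subtype.ext
    rw [LieAlgebra.SpecialLinear.sl_bracket, hHval, hEval]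
    rw [smul_sub, sub_mul, mul_sub, smul_mul_assoc, smul_mul_assoc, mul_smul_comm,
      mul_smul_comm, mulsame, mulne _ _ _ _ hlf, mulne _ _ _ _ hlf, mulsame]
    module
  have hEH : ⁅E, H⁆ = -E := by rw [← lie_skew, hHE]
  have valsmul : ∀ (c : K) (x : g), ((c • x : g) : Matrix (Fin N) (Fin N) K) = c • (x : Matrix (Fin N) (Fin N) K) := fun c x => rfl
  have hHA : ∀ i : Fin N, i ≠ fst → i ≠ lst → ⁅H, A i⁆ = (1/2 : K) • A i := by
    intro i hif hil
    apply Subtype.ext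
    rw [LieAlgebra.SpecialLinear.sl_bracket, hHval, hAval i hif]
    simp only [valsmul, hAval i hif, smul_sub, sub_mul, mul_sub, smul_mul_assoc,
      mul_smul_comm, mulsame fst fst i, mulne lst lst fst i hlf, mulne fst i fst fst hif,
      mulne fst i lst lst hil]
    module
  have hHB : ∀ i : Fin N, i ≠ fst → i ≠ lst → ⁅H, B i⁆ = (1/2 : K) • B i := by
    intro i hif hil
    apply Subtype.ext
    rw [LieAlgebra.SpecialLinear.sl_bracket, hHval, hBval i hil]
    simp only [valsmul, hBval i hil, smul_sub, sub_mul, mul_sub, smul_mul_assoc,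
      mul_smul_comm, mulne fst fst i lst (Ne.symm hif), mulne lst lst i lst (Ne.symm hil),
      mulne i lst fst fst hlf, mulsame i lst lst]
    module
  have hEA : ∀ i : Fin N, i ≠ fst → ⁅E, A i⁆ = 0 := by
    intro i hif
    apply Subtype.ext
    rw [LieAlgebra.SpecialLinear.sl_bracket, hEval, hAval i hif]
    simp only [ZeroMemClass.coe_zero, mulne fst lst fst i hlf, mulne fst i fst lst hif,
      sub_self]
  have hEB : ∀ i : Fin N, i ≠ fst → i ≠ lst → ⁅E, B i⁆ = 0 := by
    intro i hif hil
    apply Subtype.ext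
    rw [LieAlgebra.SpecialLinear.sl_bracket, hEval, hBval i hil]
    simp only [ZeroMemClass.coe_zero, mulne fst lst i lst (Ne.symm hil),
      mulne i lst fst lst hlf, sub_self]
  have hAH : ∀ i : Fin N, i ≠ fst → i ≠ lst → ⁅A i, H⁆ = -((1/2 : K) • A i) := by
    intro i hif hil; rw [← lie_skew, hHA i hif hil]
  have hBH : ∀ i : Fin N, i ≠ fst → i ≠ lst → ⁅B i, H⁆ = -((1/2 : K) • B i) := by
    intro i hif hil; rw [← lie_skew, hHB i hif hil]
  have hAE : ∀ i : Fin N, i ≠ fst → ⁅A i, E⁆ = 0 := by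
    intro i hif; rw [← lie_skew, hEA i hif, neg_zero]
  have hBE : ∀ i : Fin N, i ≠ fst → i ≠ lst → ⁅B i, E⁆ = 0 := by
    intro i hif hil; rw [← lie_skew, hEB i hif hil, neg_zero]
  have hAA : ∀ i j : Fin N, i ≠ fst → j ≠ fst → ⁅A i, A j⁆ = 0 := by
    intro i j hif hjf
    apply Subtype.ext
    rw [LieAlgebra.SpecialLinear.sl_bracket, hAval i hif, hAval j hjf]
    simp only [ZeroMemClass.coe_zero, mulne fst i fst j hif, mulne fst j fst i hjf, sub_self]
  have hBB : ∀ i j : Fin N, i ≠ lst → j ≠ lst → ⁅B i, B j⁆ = 0 := by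
    intro i j hil hjl
    apply Subtype.ext
    rw [LieAlgebra.SpecialLinear.sl_bracket, hBval i hil, hBval j hjl]
    simp only [ZeroMemClass.coe_zero, mulne i lst j lst (Ne.symm hjl),
      mulne j lst i lst (Ne.symm hil), sub_self]
  have hABd : ∀ i : Fin N, i ≠ fst → i ≠ lst → ⁅A i, B i⁆ = E := by
    intro i hif hil
    apply Subtype.ext
    rw [LieAlgebra.SpecialLinear.sl_bracket, hAval i hif, hBval i hil, hEval]
    simp only [mulsame fst i lst, mulne i lst fst i hlf, sub_zero]
  have hBAd : ∀ i : Fin N, i ≠ fst → i ≠ lst → ⁅B i, A i⁆ = -E := by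
    intro i hif hil; rw [← lie_skew, hABd i hif hil]
  have hABne : ∀ i j : Fin N, i ≠ fst → j ≠ lst → i ≠ j → ⁅A i, B j⁆ = 0 := by
    intro i j hif hjl hij
    apply Subtype.ext
    rw [LieAlgebra.SpecialLinear.sl_bracket, hAval i hif, hBval j hjl]
    simp only [ZeroMemClass.coe_zero, mulne fst i j lst hij, mulne j lst fst i hlf, sub_self]
  have hBAne : ∀ i j : Fin N, i ≠ lst → j ≠ fst → j ≠ i → ⁅B i, A j⁆ = 0 := by
    intro i j hil hjf hji
    rw [← lie_skew, hABne j i hjf hil hji, neg_zero]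
  -- U-level commutator
  have key : ∀ x y : g, ι x * ι y - ι y * ι x = ι ⁅x, y⁆ := fun x y => by
    rw [LieHom.map_lie, Ring.lie_def]
  have ismul : ∀ (c : K) (x : g), ι (c • x) = c • ι x := fun c x => ι.map_smul c x
  have i0 : ι (0 : g) = 0 := ι.map_zero
  have ineg : ∀ x : g, ι (-x) = -ι x := fun x => by
    rw [← neg_one_smul K x, ismul, neg_one_smul]
  -- unified coefficient functions
  set X : Fin N → U := fun i => if i = fst then ι H else ι (A i) with hXdef
  set Y : Fin N → U := fun i => if i = fst then ι E else ι (B i) with hYdef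
  have hXf : X fst = ι H := if_pos rfl
  have hYf : Y fst = ι E := if_pos rfl
  have hmem : ∀ i ∈ S, i ≠ fst ∧ i ≠ lst := by
    intro i hi
    have h : 1 ≤ (i : ℕ) ∧ (i : ℕ) ≤ N - 2 := by simpa [S] using hi
    have h0 : (fst : ℕ) = 0 := rfl
    have h1 : (lst : ℕ) = N - 1 := rfl
    constructor
    · intro e
      have := h.1
      rw [e, h0] at this
      omega
    · intro e
      have := h.2
      rw [e, h1] at this
      omega
  have hXi : ∀ i ∈ S, X i = ι (A i) := fun i hi => if_neg (hmem i hi).1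
  have hYi : ∀ i ∈ S, Y i = ι (B i) := fun i hi => if_neg (hmem i hi).1
  have hr12 : r12 = ∑ i ∈ insert fst S,
      (X i ⊗ₜ[K] (Y i ⊗ₜ[K] (1:U)) - Y i ⊗ₜ[K] (X i ⊗ₜ[K] (1:U))) := by
    rw [Finset.sum_insert hfstS, hXf, hYf]
    have h : ∑ i ∈ S, (X i ⊗ₜ[K] (Y i ⊗ₜ[K] (1:U)) - Y i ⊗ₜ[K] (X i ⊗ₜ[K] (1:U)))
        = ∑ i ∈ S, (ι (A i) ⊗ₜ[K] (ι (B i) ⊗ₜ[K] (1:U)) -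
                    ι (B i) ⊗ₜ[K] (ι (A i) ⊗ₜ[K] (1:U))) :=
      Finset.sum_congr rfl fun i hi => by rw [hXi i hi, hYi i hi]
    rw [h]
  have hr13 : r13 = ∑ i ∈ insert fst S,
      (X i ⊗ₜ[K] ((1:U) ⊗ₜ[K] Y i) - Y i ⊗ₜ[K] ((1:U) ⊗ₜ[K] X i)) := by
    rw [Finset.sum_insert hfstS, hXf, hYf]
    have h : ∑ i ∈ S, (X i ⊗ₜ[K] ((1:U) ⊗ₜ[K] Y i) - Y i ⊗ₜ[K] ((1:U) ⊗ₜ[K] X i))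
        = ∑ i ∈ S, (ι (A i) ⊗ₜ[K] ((1:U) ⊗ₜ[K] ι (B i)) -
                    ι (B i) ⊗ₜ[K] ((1:U) ⊗ₜ[K] ι (A i))) :=
      Finset.sum_congr rfl fun i hi => by rw [hXi i hi, hYi i hi]
    rw [h]
  have hr23 : r23 = ∑ i ∈ insert fst S,
      ((1:U) ⊗ₜ[K] (X i ⊗ₜ[K] Y i) - (1:U) ⊗ₜ[K] (Y i ⊗ₜ[K] X i)) := by
    rw [Finset.sum_insert hfstS, hXf, hYf]
    have h : ∑ i ∈ S, ((1:U) ⊗ₜ[K] (X i ⊗ₜ[K] Y i) - (1:U) ⊗ₜ[K] (Y i ⊗ₜ[K] X i))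
        = ∑ i ∈ S, ((1:U) ⊗ₜ[K] (ι (A i) ⊗ₜ[K] ι (B i)) -
                    (1:U) ⊗ₜ[K] (ι (B i) ⊗ₜ[K] ι (A i))) :=
      Finset.sum_congr rfl fun i hi => by rw [hXi i hi, hYi i hi]
    rw [h]
  have main : (r12 * r13 - r13 * r12) + (r12 * r23 - r23 * r12) + (r13 * r23 - r23 * r13)
      = ∑ i ∈ insert fst S, ∑ j ∈ insert fst S,
          Stmt7Aux.cell (R := K) (X i) (Y i) (X j) (Y j) := by
    rw [hr12, hr13, hr23, Stmt7Aux.sum_comm_expand, Stmt7Aux.sum_comm_expand,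
      Stmt7Aux.sum_comm_expand, ← Finset.sum_add_distrib, ← Finset.sum_add_distrib]
    refine Finset.sum_congr rfl fun i _ => ?_
    rw [← Finset.sum_add_distrib, ← Finset.sum_add_distrib]
    exact Finset.sum_congr rfl fun j _ => Stmt7Aux.cell_eq _ _ _ _
  have cff : Stmt7Aux.cell (R := K) (X fst) (Y fst) (X fst) (Y fst) = 0 := by
    rw [hXf, hYf]
    simp only [Stmt7Aux.cell, key, hHE, hEH, lie_self, i0, ineg,
      TensorProduct.zero_tmul, TensorProduct.tmul_zero, TensorProduct.neg_tmul,
      TensorProduct.tmul_neg]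
    abel
  have coff : ∀ i ∈ S, ∀ j ∈ S, j ≠ i →
      Stmt7Aux.cell (R := K) (X i) (Y i) (X j) (Y j) = 0 := by
    intro i hi j hj hne
    obtain ⟨hif, hil⟩ := hmem i hi
    obtain ⟨hjf, hjl⟩ := hmem j hj
    rw [hXi i hi, hYi i hi, hXi j hj, hYi j hj]
    simp only [Stmt7Aux.cell, key, hAA i j hif hjf, hBB i j hil hjl,
      hABne i j hif hjl (Ne.symm hne), hBAne i j hil hjf hne, i0,
      TensorProduct.zero_tmul, TensorProduct.tmul_zero, sub_zero, add_zero, zero_sub,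
      neg_zero, sub_self]
  have keyi : ∀ i ∈ S,
      Stmt7Aux.cell (R := K) (X fst) (Y fst) (X i) (Y i) +
      (Stmt7Aux.cell (R := K) (X i) (Y i) (X fst) (Y fst) +
       Stmt7Aux.cell (R := K) (X i) (Y i) (X i) (Y i)) = 0 := by
    intro i hi
    obtain ⟨hif, hil⟩ := hmem i hi
    rw [hXf, hYf, hXi i hi, hYi i hi]
    simp only [Stmt7Aux.cell, key, hHA i hif hil, hHB i hif hil, hEA i hif, hEB i hif hil,
      hAH i hif hil, hBH i hif hil, hAE i hif, hBE i hif hil, hABd i hif hil, hBAd i hif hil,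
      lie_self, i0, ineg, ismul, TensorProduct.zero_tmul,
      TensorProduct.tmul_zero, TensorProduct.neg_tmul, TensorProduct.tmul_neg,
      TensorProduct.smul_tmul, TensorProduct.tmul_smul]
    module
  rw [main]
  simp only [Finset.sum_insert hfstS]
  rw [cff, zero_add, ← Finset.sum_add_distrib]
  refine Finset.sum_eq_zero fun i hi => ?_
  rw [Finset.sum_eq_single_of_mem i hi fun j hj hne => coff i hi j hj hne]
  exact keyi i hi
end

section
/- Let H be a Hopf algebra, F ∈ H ⊗ H an invertible element satisfying the factorization identities (Δ ⊗ id)(F) = F_{13} F_{23} and (id ⊗ Δ_F)(F) = F_{12} F_{13}, where Δ_F(a) = F Δ(a) F^{-1}. Then F satisfies the twist equation F_{12}(Δ ⊗ id)(F) = F_{23}(id ⊗ Δ)(F). -/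
open scoped TensorProduct

/-- if an invertible `F ∈ H ⊗ H` satisfies the factorization identities
`(Δ ⊗ id)(F) = F₁₃ F₂₃` and `(id ⊗ Δ_F)(F) = F₁₂ F₁₃` (where `Δ_F(a) = F Δ(a) F⁻¹`, so
`(id ⊗ Δ_F)(F) = F₂₃ (id ⊗ Δ)(F) F₂₃⁻¹`), then `F` satisfies the twist equation
`F₁₂ (Δ ⊗ id)(F) = F₂₃ (id ⊗ Δ)(F)`. -/
theorem stmt10 (R : Type*) [CommRing R] (A : Type*) [Ring A] [Algebra R A]
    (Δ : A →ₐ[R] A ⊗[R] A) (ε : A →ₐ[R] R)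
    (ι12 : A ⊗[R] A →ₐ[R] A ⊗[R] (A ⊗[R] A))
    (hι12 : ι12 = Algebra.TensorProduct.map (AlgHom.id R A) Algebra.TensorProduct.includeLeft)
    (ι13 : A ⊗[R] A →ₐ[R] A ⊗[R] (A ⊗[R] A))
    (hι13 : ι13 = Algebra.TensorProduct.map (AlgHom.id R A) Algebra.TensorProduct.includeRight)
    (ι23 : A ⊗[R] A →ₐ[R] A ⊗[R] (A ⊗[R] A))
    (hι23 : ι23 = Algebra.TensorProduct.includeRight)
    (D1 : A ⊗[R] A → A ⊗[R] (A ⊗[R] A))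
    (hD1 : ∀ x, D1 x = (TensorProduct.assoc R A A A)
      ((Algebra.TensorProduct.map Δ (AlgHom.id R A)) x))
    (D2 : A ⊗[R] A → A ⊗[R] (A ⊗[R] A))
    (hD2 : ∀ x, D2 x = (Algebra.TensorProduct.map (AlgHom.id R A) Δ) x)
    (hcoassoc : ∀ a : A, D1 (Δ a) = D2 (Δ a))
    (F Finv : A ⊗[R] A) (hinv1 : F * Finv = 1) (hinv2 : Finv * F = 1)
    -- (Δ ⊗ id)(F) = F₁₃ F₂₃
    (hfac1 : D1 F = ι13 F * ι23 F)
    -- (id ⊗ Δ_F)(F) = F₁₂ F₁₃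
    (hfac2 : ι23 F * D2 F * ι23 Finv = ι12 F * ι13 F) :
    ι12 F * D1 F = ι23 F * D2 F := by
  rw [hfac1, ← mul_assoc, ← hfac2, mul_assoc, mul_assoc, ← map_mul, hinv2, map_one, mul_one]
end

section
/- Let (H, Δ, ε, S, R) be a quasitriangular Hopf algebra and F a twist for H. Then R_F = F_{21} R F^{-1} satisfies the quasitriangularity axiom R_F Δ_F(a) = Δ_F^{op}(a) R_F for all a ∈ H, where Δ_F(a) = F Δ(a) F^{-1} and Δ_F^{op} = τ ∘ Δ_F. -/
open scoped TensorProduct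

/-- if `(H, Δ, ε, R-matrix)` is quasitriangular and `F` is a twist, then
`R_F = F₂₁ R F⁻¹` satisfies `R_F Δ_F(a) = Δ_F^{op}(a) R_F` for all `a`, where
`Δ_F(a) = F Δ(a) F⁻¹` and `Δ_F^{op} = τ ∘ Δ_F` with `τ` the flip of tensor factors. -/
theorem stmt11 (R : Type*) [CommRing R] (A : Type*) [Ring A] [Algebra R A]
    (Δ : A →ₐ[R] A ⊗[R] A) (ε : A →ₐ[R] R)
    (ι12 : A ⊗[R] A →ₐ[R] A ⊗[R] (A ⊗[R] A))
    (hι12 : ι12 = Algebra.TensorProduct.map (AlgHom.id R A) Algebra.TensorProduct.includeLeft)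
    (ι23 : A ⊗[R] A →ₐ[R] A ⊗[R] (A ⊗[R] A))
    (hι23 : ι23 = Algebra.TensorProduct.includeRight)
    (D1 : A ⊗[R] A → A ⊗[R] (A ⊗[R] A))
    (hD1 : ∀ x, D1 x = (TensorProduct.assoc R A A A)
      ((Algebra.TensorProduct.map Δ (AlgHom.id R A)) x))
    (D2 : A ⊗[R] A → A ⊗[R] (A ⊗[R] A))
    (hD2 : ∀ x, D2 x = (Algebra.TensorProduct.map (AlgHom.id R A) Δ) x)
    (hcoassoc : ∀ a : A, D1 (Δ a) = D2 (Δ a))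
    -- the flip τ
    (τ : A ⊗[R] A ≃ₐ[R] A ⊗[R] A) (hτ : τ = Algebra.TensorProduct.comm R A A)
    -- the universal R-matrix: invertible and intertwining Δ with Δ^{op}
    (Rm Rminv : A ⊗[R] A) (hRinv1 : Rm * Rminv = 1) (hRinv2 : Rminv * Rm = 1)
    (hqt : ∀ a : A, Rm * Δ a = τ (Δ a) * Rm)
    -- the twist F: invertible, normalized, cocycle equation
    (F Finv : A ⊗[R] A) (hinv1 : F * Finv = 1) (hinv2 : Finv * F = 1)
    (hnorm1 : (Algebra.TensorProduct.lid R A)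
      ((Algebra.TensorProduct.map ε (AlgHom.id R A)) F) = 1)
    (hnorm2 : (TensorProduct.rid R A)
      ((Algebra.TensorProduct.map (AlgHom.id R A) ε F : A ⊗[R] R)) = 1)
    (hcocycle : ι12 F * D1 F = ι23 F * D2 F) :
    -- conclusion: R_F = F₂₁ R F⁻¹ intertwines Δ_F and Δ_F^{op}
    ∀ a : A,
      (τ F * Rm * Finv) * (F * Δ a * Finv) =
      τ (F * Δ a * Finv) * (τ F * Rm * Finv) := by
  intro a
  have k1 : ∀ x : A ⊗[R] A, Finv * (F * x) = x := fun x => by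
    rw [← mul_assoc, hinv2, one_mul]
  have k2 : ∀ x : A ⊗[R] A, τ Finv * (τ F * x) = x := fun x => by
    rw [← mul_assoc, ← map_mul, hinv2, map_one, one_mul]
  simp only [map_mul, mul_assoc, k1, k2]
  rw [← mul_assoc Rm, hqt, mul_assoc]
end
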